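/- arXiv:1805.12477 — 3 statements merged into one kernel-verified Lean document; each statement's English description precedes it below -/
import Mathlib

section
/- Let E be a finite set. For every binary delta-matroid B on the ground set E there exists a Lagrangian subspace L ⊆ V_E with ν_E(L) = B. -/
open Finset
open scoped symmDiff

variable {E : Type*} [Fintype E] [DecidableEq E]

/-- The symplectic vector space `V_E = (E → 𝔽₂) × (E → 𝔽₂)`. -/
abbrev V (E : Type*) : Type _ := (E → ZMod 2) × (E → ZMod 2)

/-- Basis vector `e`. -/
def baseV (e : E) : V E := (Pi.single e 1, 0)

/-- Basis vector `e^∨`. -/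
def dualV (e : E) : V E := (0, Pi.single e 1)

/-- The symplectic form on `V E`. -/
def omegaForm (u v : V E) : ZMod 2 := ∑ e, (u.1 e * v.2 e + u.2 e * v.1 e)

/-- A subspace is Lagrangian if the form vanishes on it and its dimension is `|E|`. -/
def IsLagrangian (L : Submodule (ZMod 2) (V E)) : Prop :=
  (∀ u ∈ L, ∀ v ∈ L, omegaForm u v = 0) ∧
    Module.finrank (ZMod 2) L = Fintype.card E

/-- The span of `{e^∨ : e ∈ Y} ∪ {e : e ∈ E \ Y}`. -/
def coordSpan (Y : Finset E) : Submodule (ZMod 2) (V E) :=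
  Submodule.span (ZMod 2)
    ((fun e => dualV e) '' (Y : Set E) ∪ (fun e => baseV e) '' ((Yᶜ : Finset E) : Set E))

/-- `Y` is feasible for `L` iff `L ∩ ⟨Y^∨ ⊔ (E \ Y)⟩ = 0`. -/
def Feasible (L : Submodule (ZMod 2) (V E)) (Y : Finset E) : Prop :=
  L ⊓ coordSpan Y = ⊥

/-- The set system `ν_E(L)`. -/
def nu (L : Submodule (ZMod 2) (V E)) : Set (Finset E) := {Y | Feasible L Y}

/-- The nondegeneracy set system of a matrix `A`. -/
def Phi (A : Matrix E E (ZMod 2)) : Set (Finset E) :=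
  {U : Finset E | IsUnit (A.submatrix (fun i : ↥U => (i : E)) (fun j : ↥U => (j : E))).det}

/-- The symmetric exchange axiom. -/
def SEAxiom (Φ : Set (Finset E)) : Prop :=
  ∀ φ₁ ∈ Φ, ∀ φ₂ ∈ Φ, ∀ e ∈ φ₁ ∆ φ₂, ∃ e' ∈ φ₁ ∆ φ₂, φ₁ ∆ ({e, e'} : Finset E) ∈ Φ

/-- Binary delta-matroid: a twist of a nondegeneracy set system. -/
def IsBinaryDM (Φ : Set (Finset E)) : Prop :=
  ∃ (A : Matrix E E (ZMod 2)) (E' : Finset E), A.IsSymm ∧ Φ = (· ∆ E') '' Phi A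

/-- The involution `σ_e` swapping `e` and `e^∨`. -/
def sigmaE (e : E) : V E →ₗ[ZMod 2] V E where
  toFun u := (fun f => if f = e then u.2 f else u.1 f, fun f => if f = e then u.1 f else u.2 f)
  map_add' u v := by ext f <;> dsimp <;> split <;> rfl
  map_smul' c u := by ext f <;> dsimp <;> split <;> rfl

/-- Composition of the `σ_e` over `e ∈ E'`. -/
def sigmaSet (E' : Finset E) : V E →ₗ[ZMod 2] V E where
  toFun u := (fun f => if f ∈ E' then u.2 f else u.1 f, fun f => if f ∈ E' then u.1 f else u.2 f)
  map_add' u v := by ext f <;> dsimp <;> split <;> rfl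
  map_smul' c u := by ext f <;> dsimp <;> split <;> rfl

/-- A Lagrangian subspace is graphic if for every `e` there is `v_e ∈ L` with
`ω(v_e,e)=1` and `ω(v_e,e')=0` for `e' ≠ e`. -/
def IsGraphic (L : Submodule (ZMod 2) (V E)) : Prop :=
  ∀ e : E, ∃ v ∈ L, omegaForm v (baseV e) = 1 ∧
    ∀ e' : E, e' ≠ e → omegaForm v (baseV e') = 0

/-- The vector `e^∨ + Σ_{e'} A_{e,e'} e'`. -/
def rowVec (A : Matrix E E (ZMod 2)) (e : E) : V E := (A e, Pi.single e 1)

/-- The subspace spanned by the vectors `rowVec A e`, `e ∈ E`. -/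
def graphOf (A : Matrix E E (ZMod 2)) : Submodule (ZMod 2) (V E) :=
  Submodule.span (ZMod 2) (Set.range (rowVec A))

/-- The first Vassiliev move: `e^∨ ↦ e^∨ + e'`, `e'^∨ ↦ e'^∨ + e`, fixing other basis vectors. -/
def vassiliev1 (e e' : E) : V E →ₗ[ZMod 2] V E where
  toFun u := (fun f => u.1 f + (if f = e' then u.2 e else 0) + (if f = e then u.2 e' else 0), u.2)
  map_add' u v := by ext f <;> dsimp <;> split_ifs <;> ring
  map_smul' c u := by ext f <;> dsimp <;> split_ifs <;> ring

/-!
Twisting by `E'` is realised by the involution `σ_{E'}` exchanging `e` and `e^∨` for `e ∈ E'`: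
it preserves `ω` and carries the coordinate subspace of `Y ∆ E'` onto that of `Y`, so
`ν_E(σ_{E'} L) = ν_E(L) * E'`. It remains to realise `Φ(A)`. The graph `{(x A, x)}` of a symmetric
`A` is Lagrangian, and it meets the coordinate subspace of `U` exactly in the vectors `(x A, x)`
with `x` supported on `U` and `x A` vanishing on `U`; these are nonzero iff `A|_U` is singular.
-/

open Matrix

lemma omegaForm_eq_dotProduct {ι : Type*} [Fintype ι] (u v : V ι) :
    omegaForm u v = u.1 ⬝ᵥ v.2 + u.2 ⬝ᵥ v.1 := by
  simp only [omegaForm, dotProduct, Finset.sum_add_distrib]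

lemma eq_sum_baseV_add_dualV (v : V E) :
    v = ∑ f, (v.1 f • baseV f + v.2 f • dualV f) := by
  ext g <;> simp [baseV, dualV, Prod.fst_sum, Prod.snd_sum, Pi.single_apply]

lemma mem_coordSpan_iff {Y : Finset E} {v : V E} :
    v ∈ coordSpan Y ↔ (∀ f ∈ Y, v.1 f = 0) ∧ ∀ f ∉ Y, v.2 f = 0 := by
  constructor
  · let S : Submodule (ZMod 2) (V E) :=
      (Submodule.pi (Y : Set E) fun _ => ⊥).prod (Submodule.pi (↑Yᶜ) fun _ => ⊥)
    have hS : coordSpan Y ≤ S := by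
      refine Submodule.span_le.mpr ?_
      rintro _ (⟨e, he, rfl⟩ | ⟨e, he, rfl⟩)
      · simpa [S, dualV, Pi.single_apply] using fun f hf h => hf (h ▸ he)
      · simp_all [S, baseV, Pi.single_apply]
    intro hv
    simpa [S] using hS hv
  · rintro ⟨h1, h2⟩
    rw [eq_sum_baseV_add_dualV v]
    refine Submodule.sum_mem _ fun f _ => ?_
    by_cases hf : f ∈ Y
    · rw [h1 f hf, zero_smul, zero_add]
      exact Submodule.smul_mem _ _ (Submodule.subset_span (Or.inl ⟨f, hf, rfl⟩))
    · rw [h2 f hf, zero_smul, add_zero]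
      exact Submodule.smul_mem _ _ (Submodule.subset_span (Or.inr ⟨f, by simpa, rfl⟩))

lemma Matrix.isUnit_det_submatrix_iff {K ι : Type*} [Field K] [Fintype ι] [DecidableEq ι]
    (A : Matrix ι ι K) (U : Finset ι) :
    IsUnit (A.submatrix (fun i : U => (i : ι)) (fun j : U => (j : ι))).det ↔
      ∀ x : ι → K, (∀ i ∉ U, x i = 0) → (∀ j ∈ U, (x ᵥ* A) j = 0) → x = 0 := by
  have restrict_vecMul : ∀ x : ι → K, (∀ i ∉ U, x i = 0) → ∀ j : U,
      ((fun i : U => x i) ᵥ* A.submatrix (fun i : U => (i : ι)) (fun j : U => (j : ι))) j =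
        (x ᵥ* A) j := by
    intro x hx j
    simp only [vecMul, dotProduct, submatrix_apply]
    rw [Finset.sum_coe_sort U (fun i => x i * A i j)]
    exact Finset.sum_subset (Finset.subset_univ U) fun i _ hi => by simp [hx i hi]
  rw [isUnit_iff_ne_zero, Ne, ← exists_vecMul_eq_zero_iff, not_exists]
  constructor
  · intro h x hx hxA
    by_contra hne
    refine h (fun i : U => x i) ⟨fun h0 => hne (funext fun i => ?_), funext fun j => ?_⟩
    · by_cases hi : i ∈ U
      · exact congrFun h0 ⟨i, hi⟩
      · exact hx i hi
    · rw [restrict_vecMul x hx j]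
      exact hxA j j.2
  · rintro h w ⟨hw, hwA⟩
    let x : ι → K := fun i => if hi : i ∈ U then w ⟨i, hi⟩ else 0
    have hx : ∀ i ∉ U, x i = 0 := fun i hi => dif_neg hi
    have hxw : (fun i : U => x i) = w := funext fun i => dif_pos i.2
    refine hw (hxw ▸ funext fun i => congrFun (h x hx fun j hj => ?_) i)
    rw [← restrict_vecMul x hx ⟨j, hj⟩, hxw, hwA, Pi.zero_apply]

def graphMap {ι : Type*} [Fintype ι] (A : Matrix ι ι (ZMod 2)) : (ι → ZMod 2) →ₗ[ZMod 2] V ι :=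
  (vecMulLinear A).prod LinearMap.id

lemma graphMap_injective {ι : Type*} [Fintype ι] (A : Matrix ι ι (ZMod 2)) :
    Function.Injective (graphMap A) :=
  fun _ _ h => congrArg Prod.snd h

lemma graphOf_eq_range (A : Matrix E E (ZMod 2)) : graphOf A = LinearMap.range (graphMap A) := by
  have hrow : rowVec A = graphMap A ∘ Pi.basisFun (ZMod 2) E := by
    funext e
    simp [rowVec, graphMap, row]
  rw [graphOf, hrow, Set.range_comp, Submodule.span_image, Module.Basis.span_eq, Submodule.map_top]

lemma isLagrangian_graphOf {A : Matrix E E (ZMod 2)} (hA : A.IsSymm) :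
    IsLagrangian (graphOf A) := by
  rw [graphOf_eq_range]
  refine ⟨?_, ?_⟩
  · rintro _ ⟨x, rfl⟩ _ ⟨y, rfl⟩
    calc omegaForm (graphMap A x) (graphMap A y) = x ᵥ* A ⬝ᵥ y + x ⬝ᵥ y ᵥ* Aᵀ := by
          rw [omegaForm_eq_dotProduct, hA.eq]; rfl
      _ = 0 := by rw [vecMul_transpose, dotProduct_mulVec, CharTwo.add_self_eq_zero]
  · rw [LinearMap.finrank_range_of_inj (graphMap_injective A),
      Module.finrank_fintype_fun_eq_card]

lemma feasible_graphOf_iff (A : Matrix E E (ZMod 2)) (U : Finset E) :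
    Feasible (graphOf A) U ↔ U ∈ Phi A := by
  rw [Feasible, graphOf_eq_range, Phi, Set.mem_ofPred_eq, isUnit_det_submatrix_iff,
    Submodule.eq_bot_iff]
  constructor
  · intro h x hx hxA
    exact congrArg Prod.snd (h (graphMap A x) ⟨⟨x, rfl⟩, mem_coordSpan_iff.mpr ⟨hxA, hx⟩⟩)
  · rintro h _ ⟨⟨x, rfl⟩, hxU⟩
    obtain ⟨hxA, hx⟩ := mem_coordSpan_iff.mp hxU
    rw [h x hx hxA, map_zero]

lemma nu_graphOf (A : Matrix E E (ZMod 2)) : nu (graphOf A) = Phi A :=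
  Set.ext (feasible_graphOf_iff A)

lemma sigmaSet_involutive {ι : Type*} [DecidableEq ι] (E' : Finset ι) :
    Function.Involutive (sigmaSet (E := ι) E') := by
  intro u
  ext f <;> simp only [sigmaSet, LinearMap.coe_mk, AddHom.coe_mk] <;> split_ifs <;> rfl

def sigmaEquiv (E' : Finset E) : V E ≃ₗ[ZMod 2] V E :=
  LinearEquiv.ofInvolutive (sigmaSet E') (sigmaSet_involutive E')

lemma omegaForm_sigmaSet (E' : Finset E) (u v : V E) :
    omegaForm (sigmaSet E' u) (sigmaSet E' v) = omegaForm u v := by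
  refine Finset.sum_congr rfl fun f _ => ?_
  simp only [sigmaSet, LinearMap.coe_mk, AddHom.coe_mk]
  split_ifs <;> ring

lemma IsLagrangian.map_sigmaSet {L : Submodule (ZMod 2) (V E)} (hL : IsLagrangian L)
    (E' : Finset E) : IsLagrangian (L.map (sigmaSet E')) := by
  refine ⟨?_, ?_⟩
  · rintro _ ⟨u, hu, rfl⟩ _ ⟨v, hv, rfl⟩
    rw [omegaForm_sigmaSet]
    exact hL.1 u hu v hv
  · exact (LinearEquiv.finrank_map_eq (sigmaEquiv E') L).trans hL.2

lemma sigmaSet_mem_coordSpan_iff {E' Y : Finset E} {v : V E} :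
    sigmaSet E' v ∈ coordSpan Y ↔ v ∈ coordSpan (Y ∆ E') := by
  simp only [mem_coordSpan_iff, sigmaSet, LinearMap.coe_mk, AddHom.coe_mk, mem_symmDiff]
  grind

lemma map_sigmaSet_coordSpan (E' Y : Finset E) :
    (coordSpan Y).map (sigmaSet E') = coordSpan (Y ∆ E') := by
  ext v
  constructor
  · rintro ⟨w, hw, rfl⟩
    rwa [sigmaSet_mem_coordSpan_iff, symmDiff_symmDiff_cancel_right]
  · exact fun hv => ⟨sigmaSet E' v, sigmaSet_mem_coordSpan_iff.mpr hv, sigmaSet_involutive E' v⟩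

lemma feasible_map_sigmaSet_iff (L : Submodule (ZMod 2) (V E)) (E' Y : Finset E) :
    Feasible (L.map (sigmaSet E')) Y ↔ Feasible L (Y ∆ E') := by
  rw [Feasible, Feasible, ← symmDiff_symmDiff_cancel_right E' Y, ← map_sigmaSet_coordSpan,
    symmDiff_symmDiff_cancel_right, ← Submodule.map_inf _ (sigmaSet_involutive E').injective]
  exact Submodule.map_eq_bot_iff (e := sigmaEquiv E')

lemma nu_map_sigmaSet (L : Submodule (ZMod 2) (V E)) (E' : Finset E) :
    nu (L.map (sigmaSet E')) = (· ∆ E') '' nu L := by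
  rw [(symmDiff_left_involutive E').image_eq_preimage_symm]
  exact Set.ext fun Y => feasible_map_sigmaSet_iff L E' Y

/-- every binary delta-matroid on `E` is `ν_E(L)` for some Lagrangian `L`. -/
theorem stmt4 (B : Set (Finset E)) (hB : IsBinaryDM B) :
    ∃ L : Submodule (ZMod 2) (V E), IsLagrangian L ∧ nu L = B := by
  obtain ⟨A, E', hA, rfl⟩ := hB
  exact ⟨(graphOf A).map (sigmaSet E'), (isLagrangian_graphOf hA).map_sigmaSet E',
    by rw [nu_map_sigmaSet, nu_graphOf]⟩
end

section
/- Let E be a finite set and L ⊆ V_E a Lagrangian subspace. Then there exists a subset E' ⊆ E such that the twisted Lagrangian subspace L * E' is graphic. -/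
open Finset
open scoped symmDiff

variable {E : Type*} [Fintype E] [DecidableEq E]

/-!
Induct over the coordinates. If some vector of `S` has a nonzero `e^∨`-coordinate, leave `e`
untwisted and recurse on the vectors whose `e^∨`-coordinate vanishes: pairing with that vector
kills the `e`-coordinate at the end. Otherwise twist `e` and recurse on all of `S`. The twisted
subspace then meets `{v | v.2 = 0}` trivially, so for dimension reasons its projection to the
second factor is an isomorphism, which is what graphic means.
-/

lemma ZMod.two_eq_one_of_ne_zero {x : ZMod 2} (hx : x ≠ 0) : x = 1 := by
  fin_cases x
  exacts [absurd rfl hx, rfl]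

def omegaOn (T : Finset E) (u v : V E) : ZMod 2 := ∑ f ∈ T, (u.1 f * v.2 f + u.2 f * v.1 f)

omit [DecidableEq E] in
lemma omegaOn_univ : omegaOn (Finset.univ : Finset E) = omegaForm := rfl

omit [Fintype E] in
lemma omegaOn_insert {e : E} {T : Finset E} (he : e ∉ T) (u v : V E) :
    omegaOn (insert e T) u v = (u.1 e * v.2 e + u.2 e * v.1 e) + omegaOn T u v :=
  Finset.sum_insert he

omit [Fintype E] [DecidableEq E] in
lemma omegaOn_eq_zero_of_vanishOn {T : Finset E} {u : V E}
    (hu : ∀ f ∈ T, u.1 f = 0 ∧ u.2 f = 0) (v : V E) : omegaOn T u v = 0 :=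
  Finset.sum_eq_zero fun f hf => by simp [(hu f hf).1, (hu f hf).2]

lemma omegaForm_baseV (v : V E) (e : E) : omegaForm v (baseV e) = v.2 e := by
  simp [omegaForm, baseV, Pi.single_apply]

omit [Fintype E] in
@[simp] lemma sigmaSet_apply (Y : Finset E) (v : V E) :
    sigmaSet Y v = (fun f => if f ∈ Y then v.2 f else v.1 f,
      fun f => if f ∈ Y then v.1 f else v.2 f) := rfl

omit [Fintype E] in
lemma sigmaSet_involutive_s8 (Y : Finset E) : Function.Involutive (sigmaSet Y) := by
  intro v
  ext f <;> by_cases hf : f ∈ Y <;> simp [hf]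

lemma exists_twist_vanishOn_of_isotropicOn (T : Finset E) (S : Set (V E))
    (hS : ∀ u ∈ S, ∀ v ∈ S, omegaOn T u v = 0) :
    ∃ Y ⊆ T, ∀ v ∈ S, (sigmaSet Y v).2 = 0 → ∀ f ∈ T, v.1 f = 0 ∧ v.2 f = 0 := by
  induction T using Finset.induction_on generalizing S with
  | empty => exact ⟨∅, subset_refl _, fun _ _ _ f hf => absurd hf (Finset.notMem_empty f)⟩
  | @insert e T he IH =>
    by_cases hb : ∃ b ∈ S, b.2 e ≠ 0
    · obtain ⟨b, hbS, hbe⟩ := hb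
      replace hbe := ZMod.two_eq_one_of_ne_zero hbe
      obtain ⟨Y, hYT, hY⟩ := IH {v ∈ S | v.2 e = 0} fun u ⟨huS, hue⟩ v ⟨hvS, hve⟩ => by
        simpa [omegaOn_insert he, hue, hve] using hS u huS v hvS
      have heY : e ∉ Y := fun h => he (hYT h)
      refine ⟨Y, hYT.trans (Finset.subset_insert e T), fun v hvS hσ => ?_⟩
      have hve : v.2 e = 0 := by simpa [heY] using congrFun hσ e
      have hvT := hY v ⟨hvS, hve⟩ hσ
      have hv1e : v.1 e = 0 := by
        simpa [omegaOn_insert he, omegaOn_eq_zero_of_vanishOn hvT, hve, hbe] using hS v hvS b hbS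
      simpa [hv1e, hve] using hvT
    · push Not at hb
      obtain ⟨Y, hYT, hY⟩ := IH S fun u hu v hv => by
        simpa [omegaOn_insert he, hb u hu, hb v hv] using hS u hu v hv
      have heY : e ∉ Y := fun h => he (hYT h)
      refine ⟨insert e Y, Finset.insert_subset_insert e hYT, fun v hvS hσ => ?_⟩
      have hv1e : v.1 e = 0 := by simpa using congrFun hσ e
      have hσY : (sigmaSet Y v).2 = 0 := by
        funext f
        by_cases hfe : f = e
        · subst hfe; simpa [heY] using hb v hvS
        · simpa [hfe] using congrFun hσ f
      simpa [hv1e, hb v hvS] using hY v hvS hσY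

lemma isGraphic_of_finrank_of_snd_eq_zero (L : Submodule (ZMod 2) (V E))
    (hdim : Module.finrank (ZMod 2) L = Fintype.card E) (hL : ∀ v ∈ L, v.2 = 0 → v = 0) :
    IsGraphic L := by
  let π : L →ₗ[ZMod 2] (E → ZMod 2) := (LinearMap.snd _ _ _).comp L.subtype
  have hinj : Function.Injective π :=
    fun v w h => by simpa [sub_eq_zero] using hL _ (v - w).2 (by simpa [π, sub_eq_zero] using h)
  have hsurj : Function.Surjective π :=
    (LinearMap.injective_iff_surjective_of_finrank_eq_finrank
      (by rw [hdim, Module.finrank_fintype_fun_eq_card])).1 hinj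
  intro e
  obtain ⟨⟨v, hv⟩, hve⟩ := hsurj (Pi.single e 1)
  have hv2 : v.2 = Pi.single e 1 := hve
  exact ⟨v, hv, by simp [omegaForm_baseV, hv2], fun e' he' => by simp [omegaForm_baseV, hv2, he']⟩

/-- every Lagrangian subspace becomes graphic after twisting by a suitable
subset `E' ⊆ E`. -/
theorem stmt8 (L : Submodule (ZMod 2) (V E)) (hL : IsLagrangian L) :
    ∃ E' : Finset E, IsGraphic (L.map (sigmaSet E')) := by
  obtain ⟨Y, -, hY⟩ := exists_twist_vanishOn_of_isotropicOn Finset.univ (L : Set (V E))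
    (by rw [omegaOn_univ]; exact hL.1)
  refine ⟨Y, isGraphic_of_finrank_of_snd_eq_zero _ ?_ ?_⟩
  · rw [← hL.2]
    exact LinearEquiv.finrank_map_eq (LinearEquiv.ofInvolutive _ (sigmaSet_involutive_s8 Y)) L
  · rintro _ ⟨v, hv, rfl⟩ hσ
    have hv0 : v = 0 := by
      ext f
      exacts [(hY v hv hσ f (Finset.mem_univ f)).1, (hY v hv hσ f (Finset.mem_univ f)).2]
    rw [hv0, map_zero]
end

section
/- Let E be a finite set and e, e' ∈ E two distinct elements. The first Vassiliev move, i.e. the linear map T: V_E → V_E fixing all basis vectors except e^∨ ↦ e^∨ + e' and e'^∨ ↦ e'^∨ + e, preserves the symplectic form ω (ω(T(u), T(v)) = ω(u, v) for all u, v ∈ V_E); consequently T maps every Lagrangian subspace of V_E to a Lagrangian subspace. -/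
open Finset
open scoped symmDiff

variable {E : Type*} [Fintype E] [DecidableEq E]

/-! The move adds `u₂(e) e' + u₂(e') e` to the first coordinate of `u`, which changes `ω(u, v)` by
`u₂(e) v₂(e') + u₂(e') v₂(e)` once from each argument; over `𝔽₂` the two contributions cancel. -/

lemma omegaForm_baseV_s15 (u : V E) (f : E) : omegaForm u (baseV f) = u.2 f := by
  simp [omegaForm, baseV, Pi.single_apply]

lemma omegaForm_dualV (u : V E) (f : E) : omegaForm u (dualV f) = u.1 f := by
  simp [omegaForm, dualV, Pi.single_apply]

lemma eq_zero_of_forall_omegaForm_eq_zero {u : V E} (hu : ∀ v, omegaForm u v = 0) : u = 0 :=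
  Prod.ext (funext fun f => (omegaForm_dualV u f).symm.trans (hu _))
    (funext fun f => (omegaForm_baseV_s15 u f).symm.trans (hu _))

/-- Since `ω` is nondegenerate, a linear map preserving it is injective. -/
lemma injective_of_preserves_omegaForm {T : V E →ₗ[ZMod 2] V E}
    (hT : ∀ u v, omegaForm (T u) (T v) = omegaForm u v) : Function.Injective T := by
  refine (injective_iff_map_eq_zero T).2 fun u hu => eq_zero_of_forall_omegaForm_eq_zero fun v => ?_
  rw [← hT, hu]
  simp [omegaForm]

lemma IsLagrangian.map_of_preserves_omegaForm {T : V E →ₗ[ZMod 2] V E}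
    (hT : ∀ u v, omegaForm (T u) (T v) = omegaForm u v) {L : Submodule (ZMod 2) (V E)}
    (hL : IsLagrangian L) : IsLagrangian (L.map T) := by
  refine ⟨?_, ?_⟩
  · rintro _ ⟨u, hu, rfl⟩ _ ⟨v, hv, rfl⟩
    rw [hT]
    exact hL.1 u hu v hv
  · rw [← hL.2]
    exact (Submodule.equivMapOfInjective T (injective_of_preserves_omegaForm hT) L).finrank_eq.symm

lemma omegaForm_vassiliev1 (e e' : E) (u v : V E) :
    omegaForm (vassiliev1 e e' u) (vassiliev1 e e' v) = omegaForm u v := by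
  have expand : ∀ f : E,
      (u.1 f + (if f = e' then u.2 e else 0) + (if f = e then u.2 e' else 0)) * v.2 f +
        u.2 f * (v.1 f + (if f = e' then v.2 e else 0) + (if f = e then v.2 e' else 0)) =
      (u.1 f * v.2 f + u.2 f * v.1 f) +
        ((if f = e' then u.2 e * v.2 f + u.2 f * v.2 e else 0) +
          (if f = e then u.2 e' * v.2 f + u.2 f * v.2 e' else 0)) := by
    intro f; split_ifs <;> ring
  simp only [omegaForm, vassiliev1, LinearMap.coe_mk, AddHom.coe_mk]
  rw [Finset.sum_congr rfl fun f _ => expand f]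
  simp only [Finset.sum_add_distrib, Finset.sum_ite_eq' Finset.univ, Finset.mem_univ, if_true]
  have cancel : ∀ a b : ZMod 2, a + b + (b + a) = 0 := by decide
  rw [cancel, add_zero]

theorem stmt15_general (e e' : E) :
    (∀ u v : V E, omegaForm (vassiliev1 e e' u) (vassiliev1 e e' v) = omegaForm u v) ∧
    ∀ L : Submodule (ZMod 2) (V E), IsLagrangian L →
      IsLagrangian (L.map (vassiliev1 e e')) :=
  ⟨omegaForm_vassiliev1 e e', fun _ hL => hL.map_of_preserves_omegaForm (omegaForm_vassiliev1 e e')⟩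

/-- the first Vassiliev move preserves the symplectic form; consequently it
maps Lagrangian subspaces to Lagrangian subspaces. -/
theorem stmt15 (e e' : E) (hne : e ≠ e') :
    (∀ u v : V E, omegaForm (vassiliev1 e e' u) (vassiliev1 e e' v) = omegaForm u v) ∧
    ∀ L : Submodule (ZMod 2) (V E), IsLagrangian L →
      IsLagrangian (L.map (vassiliev1 e e')) :=
  stmt15_general e e'
end
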